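/- arXiv:2509.21937 — 3 statements merged into one kernel-verified Lean document; each statement's English description precedes it below -/
import Mathlib

section
/- Let γ > 2k > 0, τ > 0, 0 < α ≤ 1, and v > 0. Then the equations v^α·cos(απ/2) = -γ + k·cos v - k·e^{-γτ}·cos(v + vτ) and v^α·sin(απ/2) = -k·sin v + k·e^{-γτ}·sin(v + vτ) have no common solution; in fact the first equation alone has no solution v > 0. -/
theorem stmt_7 (α k γ τ : ℝ) (hα0 : 0 < α) (hα1 : α ≤ 1)
    (hγ : γ > 2 * k) (hk : 2 * k > 0) (hτ : τ > 0) :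
    (∀ v : ℝ, v > 0 →
      ¬ (v ^ α * Real.cos (α * Real.pi / 2) =
            -γ + k * Real.cos v - k * Real.exp (-γ * τ) * Real.cos (v + v * τ) ∧
          v ^ α * Real.sin (α * Real.pi / 2) =
            -k * Real.sin v + k * Real.exp (-γ * τ) * Real.sin (v + v * τ))) ∧
    (∀ v : ℝ, v > 0 →
      v ^ α * Real.cos (α * Real.pi / 2) ≠
        -γ + k * Real.cos v - k * Real.exp (-γ * τ) * Real.cos (v + v * τ)) := by
  have hk0 : 0 < k := by linarith
  have key : ∀ v : ℝ, v > 0 →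
      v ^ α * Real.cos (α * Real.pi / 2) ≠
        -γ + k * Real.cos v - k * Real.exp (-γ * τ) * Real.cos (v + v * τ) := by
    intro v hv heq
    have hpos : 0 ≤ v ^ α * Real.cos (α * Real.pi / 2) := by
      apply mul_nonneg (Real.rpow_nonneg hv.le α)
      apply Real.cos_nonneg_of_mem_Icc
      constructor
      · have := Real.pi_pos
        nlinarith
      · have := Real.pi_pos
        nlinarith
    have he1 : Real.exp (-γ * τ) < 1 := by
      apply Real.exp_lt_one_iff.mpr
      nlinarith
    have he0 : 0 < Real.exp (-γ * τ) := Real.exp_pos _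
    have hc1 : Real.cos v ≤ 1 := Real.cos_le_one v
    have hc2 : -1 ≤ Real.cos (v + v * τ) := Real.neg_one_le_cos _
    have hke : 0 < k * Real.exp (-γ * τ) := mul_pos hk0 he0
    have h2 : k * Real.exp (-γ * τ) * Real.cos (v + v * τ) ≥ -(k * Real.exp (-γ * τ)) := by
      nlinarith
    have : -γ + k * Real.cos v - k * Real.exp (-γ * τ) * Real.cos (v + v * τ) < 0 := by
      nlinarith
    linarith [heq ▸ hpos]
  exact ⟨fun v hv h => key v hv h.1, key⟩
end

section
/- Let γ > -2k > 0 (so k < 0), τ > 0, 0 < α ≤ 1, and v > 0. Then v^α·cos(απ/2) ≠ -γ + k·cos v - k·e^{-γτ}·cos(v + vτ); in particular the characteristic equation has no purely imaginary root iv with v > 0. -/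
theorem stmt_8 (α k γ τ v : ℝ) (hα0 : 0 < α) (hα1 : α ≤ 1)
    (hγ : γ > -2 * k) (hk : -2 * k > 0) (hτ : τ > 0) (hv : v > 0) :
    v ^ α * Real.cos (α * Real.pi / 2) ≠
      -γ + k * Real.cos v - k * Real.exp (-γ * τ) * Real.cos (v + v * τ) := by
  have hkneg : k < 0 := by linarith
  have hγpos : γ > 0 := by linarith
  have hπ := Real.pi_pos
  -- LHS ≥ 0
  have hL : 0 ≤ v ^ α * Real.cos (α * Real.pi / 2) := by
    apply mul_nonneg (Real.rpow_pos_of_pos hv α).le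
    apply Real.cos_nonneg_of_mem_Icc
    constructor <;> nlinarith
  -- RHS < 0
  have hE : Real.exp (-γ * τ) < 1 := by
    rw [Real.exp_lt_one_iff]
    nlinarith
  have hEpos : 0 < Real.exp (-γ * τ) := Real.exp_pos _
  have h1 : k * Real.cos v ≤ -k := by
    nlinarith [Real.neg_one_le_cos v]
  have hkE : (0:ℝ) ≤ -(k * Real.exp (-γ * τ)) := by nlinarith
  have h2 : -(k * Real.exp (-γ * τ)) * Real.cos (v + v * τ) ≤ -(k * Real.exp (-γ * τ)) * 1 :=
    mul_le_mul_of_nonneg_left (Real.cos_le_one (v + v * τ)) hkE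
  have hR : -γ + k * Real.cos v - k * Real.exp (-γ * τ) * Real.cos (v + v * τ) < 0 := by
    nlinarith
  intro h
  linarith
end

section
/- Let 0 < α ≤ 1, γ < 0, τ > 0, and define k* = ((1+τ)^{1+1/τ}/(τ·e^{γ}))·[(ln(1+τ)/τ - γ)^α + γ]. Then for every k > k*, the function F(λ) = λ^α + γ - k·e^{-λ} + k·e^{-(λ+γ)τ - λ} has a root λ > 0. -/
theorem stmt_15 (α γ τ : ℝ) (hα0 : 0 < α) (hα1 : α ≤ 1) (hγ : γ < 0) (hτ : τ > 0) :
    ∀ k : ℝ,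
      k > (1 + τ) ^ (1 + 1 / τ) / (τ * Real.exp γ) *
            ((Real.log (1 + τ) / τ - γ) ^ α + γ) →
      ∃ lam : ℝ, lam > 0 ∧
        lam ^ α + γ - k * Real.exp (-lam) + k * Real.exp (-(lam + γ) * τ - lam) = 0 := by
  intro k hk
  set f : ℝ → ℝ := fun lam =>
    lam ^ α + γ - k * Real.exp (-lam) + k * Real.exp (-(lam + γ) * τ - lam) with hf
  set L : ℝ := Real.log (1 + τ) / τ - γ with hLdef
  have hp : (0:ℝ) < 1 + τ := by linarith
  have hlogp : 0 < Real.log (1 + τ) := Real.log_pos (by linarith)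
  have hL : 0 < L := by
    have : 0 < Real.log (1 + τ) / τ := div_pos hlogp hτ
    simp only [hLdef]; linarith
  set A : ℝ := (1 + τ) ^ (1 + 1 / τ) with hAdef
  have hr : (0:ℝ) < (1 + τ) ^ (1 / τ) := Real.rpow_pos_of_pos hp _
  have hA : 0 < A := Real.rpow_pos_of_pos hp _
  have eA : A = (1 + τ) * (1 + τ) ^ (1 / τ) := by
    rw [hAdef, Real.rpow_add hp, Real.rpow_one]
  have hexpγ : 0 < Real.exp γ := Real.exp_pos γ
  -- exp identities at L
  have e1 : Real.exp (-L) = Real.exp γ / (1 + τ) ^ (1 / τ) := by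
    have h : -L = γ - Real.log (1 + τ) * (1 / τ) := by
      simp only [hLdef]; field_simp; ring
    rw [h, Real.exp_sub, Real.rpow_def_of_pos hp (1 / τ)]
  have e2 : Real.exp (-(L + γ) * τ - L) = Real.exp γ / ((1 + τ) * (1 + τ) ^ (1 / τ)) := by
    have h1 : -(L + γ) * τ = -Real.log (1 + τ) := by
      simp only [hLdef]; field_simp; ring
    have : -(L + γ) * τ - L = -Real.log (1 + τ) + -L := by rw [h1]; ring
    rw [this, Real.exp_add, Real.exp_neg, Real.exp_log hp, e1]
    field_simp
  -- f L < 0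
  have hfL : f L < 0 := by
    have hc : 0 < τ * Real.exp γ / A := by positivity
    have h1 : L ^ α + γ < k * (τ * Real.exp γ / A) := by
      have h2 := mul_lt_mul_of_pos_right hk hc
      have h3 : A / (τ * Real.exp γ) * (L ^ α + γ) * (τ * Real.exp γ / A) = L ^ α + γ := by
        field_simp
      linarith [h2, h3.symm.le]
    have hfLval : f L = L ^ α + γ - k * (τ * Real.exp γ / A) := by
      simp only [hf, e1, e2, eA]
      field_simp
      ring
    rw [hfLval]; linarith
  -- choose M
  set C : ℝ := |k| * (1 + Real.exp (-γ * τ)) with hCdef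
  have hC : 0 ≤ C := by positivity
  set B : ℝ := 1 + C - γ with hBdef
  have hB : 0 < B := by simp only [hBdef]; linarith
  set M : ℝ := max L (B ^ (1 / α)) with hMdef
  have hLM : L ≤ M := le_max_left _ _
  have hM0 : 0 < M := lt_of_lt_of_le hL hLM
  have hMB : B ≤ M ^ α := by
    have h1 : B ^ (1 / α) ≤ M := le_max_right _ _
    have h2 : (B ^ (1 / α)) ^ α ≤ M ^ α :=
      Real.rpow_le_rpow (Real.rpow_nonneg hB.le _) h1 hα0.le
    have h3 : (B ^ (1 / α)) ^ α = B := by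
      rw [← Real.rpow_mul hB.le, one_div, inv_mul_cancel₀ (ne_of_gt hα0), Real.rpow_one]
    linarith [h2, h3.symm.le]
  -- f M ≥ 1
  have hfM : 1 ≤ f M := by
    have hekM : Real.exp (-M) ≤ 1 := by
      rw [show (1:ℝ) = Real.exp 0 by simp]
      exact Real.exp_le_exp.2 (by linarith)
    have he2 : Real.exp (-(M + γ) * τ - M) ≤ Real.exp (-γ * τ) := by
      apply Real.exp_le_exp.2
      nlinarith
    have hb1 : k * Real.exp (-M) ≤ |k| := by
      calc k * Real.exp (-M) ≤ |k| * Real.exp (-M) :=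
            mul_le_mul_of_nonneg_right (le_abs_self k) (Real.exp_pos _).le
        _ ≤ |k| * 1 := mul_le_mul_of_nonneg_left hekM (abs_nonneg k)
        _ = |k| := mul_one _
    have hb2 : -(|k| * Real.exp (-γ * τ)) ≤ k * Real.exp (-(M + γ) * τ - M) := by
      have h1 : -|k| * Real.exp (-(M + γ) * τ - M) ≤ k * Real.exp (-(M + γ) * τ - M) :=
        mul_le_mul_of_nonneg_right (neg_abs_le k) (Real.exp_pos _).le
      have h2 : |k| * Real.exp (-(M + γ) * τ - M) ≤ |k| * Real.exp (-γ * τ) :=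
        mul_le_mul_of_nonneg_left he2 (abs_nonneg k)
      linarith
    have : f M = M ^ α + γ - k * Real.exp (-M) + k * Real.exp (-(M + γ) * τ - M) := rfl
    rw [this]
    have hCexp : C = |k| + |k| * Real.exp (-γ * τ) := by rw [hCdef]; ring
    linarith [hMB, hb1, hb2]
  -- continuity
  have hcont : Continuous f := by
    have h1 : Continuous fun x : ℝ => x ^ α :=
      continuous_iff_continuousAt.2 fun x => Real.continuousAt_rpow_const x α (Or.inr hα0.le)
    apply Continuous.add
    · apply Continuous.sub
      · exact h1.add continuous_const
      · exact continuous_const.mul (Real.continuous_exp.comp continuous_neg)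
    · exact continuous_const.mul (Real.continuous_exp.comp (by continuity))
  -- IVT
  have hivt := intermediate_value_Icc hLM hcont.continuousOn
  have h0mem : (0:ℝ) ∈ Set.Icc (f L) (f M) := ⟨hfL.le, by linarith⟩
  obtain ⟨lam, hlam, hroot⟩ := hivt h0mem
  exact ⟨lam, lt_of_lt_of_le hL hlam.1, hroot⟩
end
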